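/- arXiv:1809.00872 — 4 statements merged into one kernel-verified Lean document; each statement's English description precedes it below -/
import Mathlib

section
/- Let C and C' be GRS codes over GF(q) of length n with the same evaluation vector κ and dimensions k and k' respectively, with k + k' − 1 ≤ n. Then the Hadamard product code C ∘ C' (the span of all componentwise products of a codeword of C with a codeword of C') is a GRS code of length n with evaluation vector κ and dimension k + k' − 1. -/
open Polynomial

/-- The evaluation map defining a generalized Reed–Solomon code. -/
noncomputable def grsMap {F : Type*} [Field F] {n : ℕ} (v κ : Fin n → F) :
    Polynomial F →ₗ[F] (Fin n → F) :=
  LinearMap.pi fun i => v i • (Polynomial.aeval (κ i)).toLinearMap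

/-- The `(n, k)` generalized Reed–Solomon code with weighting vector `v` and
evaluation vector `κ`. -/
noncomputable def GRS {F : Type*} [Field F] {n : ℕ} (v κ : Fin n → F) (k : ℕ) :
    Submodule F (Fin n → F) :=
  (Polynomial.degreeLT F k).map (grsMap v κ)

/-- The Hadamard (Schur) product of two linear codes: the linear span of all
componentwise products of a codeword of `A` with a codeword of `B`. -/
def hadamardCode {F : Type*} [Field F] {n : ℕ} (A B : Submodule F (Fin n → F)) :
    Submodule F (Fin n → F) :=
  Submodule.span F {x | ∃ a ∈ A, ∃ b ∈ B, x = fun i => a i * b i}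

lemma grsMap_apply {F : Type*} [Field F] {n : ℕ} (v κ : Fin n → F) (p : Polynomial F)
    (i : Fin n) : grsMap v κ p i = v i * Polynomial.aeval (κ i) p := by
  simp [grsMap, smul_eq_mul]

/-- the Hadamard product of an `(n,k)` GRS code and an `(n,k')` GRS code
with the same evaluation vector `κ` (with `k + k' - 1 ≤ n`) is an `(n, k + k' - 1)`
GRS code with evaluation vector `κ`, namely the one with weighting vector `v * v'`. -/
theorem grs_hadamard_product {F : Type*} [Field F] {n : ℕ} (v v' κ : Fin n → F)
    (hv : ∀ i, v i ≠ 0) (hv' : ∀ i, v' i ≠ 0) (hκ : ∀ i, κ i ≠ 0)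
    (hκinj : Function.Injective κ) (k k' : ℕ) (hk : 1 ≤ k) (hk' : 1 ≤ k')
    (hkn : k + k' - 1 ≤ n) :
    ∃ w : Fin n → F, (∀ i, w i ≠ 0) ∧
      hadamardCode (GRS v κ k) (GRS v' κ k') = GRS w κ (k + k' - 1) := by
  classical
  refine ⟨fun i => v i * v' i, fun i => mul_ne_zero (hv i) (hv' i), le_antisymm ?_ ?_⟩
  · rw [hadamardCode, Submodule.span_le]
    rintro x ⟨a, ⟨f, hf, rfl⟩, b, ⟨g, hg, rfl⟩, rfl⟩
    refine ⟨f * g, ?_, ?_⟩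
    · simp only [SetLike.mem_coe] at hf hg ⊢
      rw [Polynomial.mem_degreeLT] at hf hg ⊢
      rcases eq_or_ne f 0 with rfl | hf0
      · simp only [zero_mul, degree_zero]
        exact lt_of_lt_of_le (WithBot.bot_lt_coe 0) (by exact_mod_cast Nat.zero_le _)
      rcases eq_or_ne g 0 with rfl | hg0
      · simp only [mul_zero, degree_zero]
        exact lt_of_lt_of_le (WithBot.bot_lt_coe 0) (by exact_mod_cast Nat.zero_le _)
      rw [degree_eq_natDegree hf0] at hf
      rw [degree_eq_natDegree hg0] at hg
      rw [degree_mul, degree_eq_natDegree hf0, degree_eq_natDegree hg0, ← Nat.cast_add,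
        Nat.cast_lt]
      have h1 : f.natDegree < k := by exact_mod_cast hf
      have h2 : g.natDegree < k' := by exact_mod_cast hg
      omega
    · funext i
      simp only [grsMap_apply, map_mul]
      ring
  · rw [GRS, Polynomial.degreeLT_eq_span_X_pow, Submodule.map_span, Submodule.span_le]
    rintro x ⟨p, hp, rfl⟩
    simp only [Finset.coe_image, Set.mem_image, Finset.mem_coe, Finset.mem_range] at hp
    obtain ⟨j, hj, rfl⟩ := hp
    apply Submodule.subset_span
    set a := min j (k - 1) with ha
    set b := j - a with hb
    refine ⟨grsMap v κ (X ^ a), ⟨X ^ a, ?_, rfl⟩,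
            grsMap v' κ (X ^ b), ⟨X ^ b, ?_, rfl⟩, ?_⟩
    · rw [SetLike.mem_coe, Polynomial.mem_degreeLT, degree_X_pow, Nat.cast_lt]
      omega
    · rw [SetLike.mem_coe, Polynomial.mem_degreeLT, degree_X_pow, Nat.cast_lt]
      omega
    · funext i
      have hab : a + b = j := by omega
      simp only [grsMap_apply, map_pow, aeval_X]
      rw [← hab, pow_add]
      ring
end

section
/- Consider the objective function f(μ_1,...,μ_F, n) = (μ_max / (μ_min (n − T + 1) − 1)) · Σ_{i=1}^F p_i ⌈μ_i⌉ Σ_{b=0}^n γ_b (n − b) + Σ_{i=1}^F p_i ⌊1 − μ_i⌋, where μ_min = min{μ_i : μ_i ≠ 0} and μ_max = max_i μ_i, subject to Σ_i μ_i ≤ M and μ_min(n − T + 1) − 1 > 0. Then for every nonzero feasible vector μ, the vector μ' obtained by setting μ'_i = μ_min for all i in the support of μ and μ'_i = 0 otherwise is also feasible and satisfies f(μ', n) ≤ f(μ, n). Hence there exists an optimal solution in which all nonzero μ_i are equal. -/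
open Finset

/-- The minimum nonzero entry of a placement vector `μ`. -/
noncomputable def muMin {F : ℕ} (μ : Fin F → ℝ) : ℝ :=
  sInf {x | x ≠ 0 ∧ ∃ i, μ i = x}

/-- The maximum entry of a placement vector `μ`. -/
noncomputable def muMax {F : ℕ} (μ : Fin F → ℝ) : ℝ :=
  sSup (Set.range μ)

/-- The PIR backhaul-rate objective
`f(μ, n) = (μ_max / (μ_min (n − T + 1) − 1)) Σ_i p_i ⌈μ_i⌉ Σ_{b=0}^n γ_b (n − b)
           + Σ_i p_i ⌊1 − μ_i⌋`. -/
noncomputable def pirObjective {F : ℕ} (p : Fin F → ℝ) (γ : ℕ → ℝ) (T n : ℕ)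
    (μ : Fin F → ℝ) : ℝ :=
  muMax μ / (muMin μ * ((n : ℝ) - (T : ℝ) + 1) - 1) *
      ∑ i, p i * (if μ i = 0 then 0 else 1) *
        ∑ b ∈ range (n + 1), γ b * ((n : ℝ) - (b : ℝ))
    + ∑ i, p i * (if μ i = 0 then 1 else 0)

/-- Lemma 3: uniform content placement is optimal. For every nonzero
feasible placement `μ` (entries in `{0} ∪ {1/k : 1 ≤ k ≤ N_SBS − 1}`, cache
constraint `Σ μ_i ≤ M`, positive denominator), the placement `μ'` obtained by
setting all nonzero entries to `μ_min` is feasible and has an objective value at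
most that of `μ`. -/
theorem uniform_placement_optimal {F NSBS : ℕ} (T n : ℕ) (hT : 1 ≤ T)
    (hn : n ≤ NSBS) (M : ℝ) (hM : 0 < M)
    (p : Fin F → ℝ) (hp : ∀ i, 0 ≤ p i) (hp1 : ∑ i, p i = 1)
    (hpsorted : ∀ i j : Fin F, i ≤ j → p j ≤ p i)
    (γ : ℕ → ℝ) (hγ : ∀ b, 0 ≤ γ b) (hγ1 : ∑ b ∈ range (NSBS + 1), γ b = 1)
    (μ : Fin F → ℝ)
    (hμval : ∀ i, μ i = 0 ∨ ∃ k : ℕ, 1 ≤ k ∧ k ≤ NSBS - 1 ∧ μ i = 1 / (k : ℝ))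
    (hfeas : ∑ i, μ i ≤ M)
    (hden : 0 < muMin μ * ((n : ℝ) - (T : ℝ) + 1) - 1)
    (hnonzero : μ ≠ 0) :
    (∑ i, (if μ i = 0 then (0 : ℝ) else muMin μ)) ≤ M ∧
      pirObjective p γ T n (fun i => if μ i = 0 then 0 else muMin μ)
        ≤ pirObjective p γ T n μ := by
  set S : Set ℝ := {x | x ≠ 0 ∧ ∃ i, μ i = x} with hS
  have hSsub : S ⊆ Set.range μ := fun x hx => hx.2
  have hSfin : S.Finite := (Set.finite_range μ).subset hSsub
  obtain ⟨i₀, hi₀⟩ : ∃ i, μ i ≠ 0 := Function.ne_iff.mp hnonzero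
  have hSne : S.Nonempty := ⟨μ i₀, hi₀, i₀, rfl⟩
  have hmem : muMin μ ∈ S := hSne.csInf_mem hSfin
  obtain ⟨hmne, j₀, hj₀⟩ := hmem
  have hle : ∀ i, μ i ≠ 0 → muMin μ ≤ μ i := fun i hi =>
    csInf_le hSfin.bddBelow ⟨hi, i, rfl⟩
  have hpos : 0 < muMin μ := by
    rcases hμval j₀ with h | ⟨k, hk1, hk2, hk⟩
    · exact absurd (hj₀ ▸ h) hmne
    · rw [← hj₀, hk]
      positivity
  constructor
  · refine le_trans (Finset.sum_le_sum fun i _ => ?_) hfeas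
    by_cases h : μ i = 0
    · simp [h]
    · simpa [h] using hle i h
  · set μ' : Fin F → ℝ := fun i => if μ i = 0 then 0 else muMin μ with hμ'
    have hμ'zero : ∀ i, μ' i = 0 ↔ μ i = 0 := by
      intro i
      by_cases h : μ i = 0 <;> simp [hμ', h, hmne]
    have hmin' : muMin μ' = muMin μ := by
      have hset : {x | x ≠ 0 ∧ ∃ i, μ' i = x} = {muMin μ} := by
        ext x
        constructor
        · rintro ⟨hx, i, hi⟩
          by_cases h : μ i = 0 <;> simp [hμ', h] at hi
          · exact absurd hi.symm hx
          · exact hi.symm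
        · rintro rfl
          exact ⟨hmne, i₀, by simp [hμ', hi₀]⟩
      rw [muMin, hset, csInf_singleton]
    have hmax' : muMax μ' = muMin μ := by
      apply le_antisymm
      · exact csSup_le ⟨μ' i₀, i₀, rfl⟩ (by rintro x ⟨i, rfl⟩; by_cases h : μ i = 0 <;> simp [hμ', h, hpos.le])
      · exact le_csSup (Set.finite_range μ').bddAbove ⟨i₀, by simp [hμ', hi₀]⟩
    have hmaxge : muMin μ ≤ muMax μ :=
      le_csSup (Set.finite_range μ).bddAbove ⟨j₀, hj₀⟩
    have hA : 0 ≤ ∑ i, p i * (if μ i = 0 then (0:ℝ) else 1) *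
        ∑ b ∈ range (n + 1), γ b * ((n : ℝ) - (b : ℝ)) := by
      apply Finset.sum_nonneg
      intro i _
      apply mul_nonneg (mul_nonneg (hp i) (by positivity))
      apply Finset.sum_nonneg
      intro b hb
      have hbn : (b : ℝ) ≤ n := by
        exact_mod_cast Nat.lt_succ_iff.mp (Finset.mem_range.mp hb)
      have := hγ b
      nlinarith
    have hind : ∀ i, (if μ' i = 0 then (0:ℝ) else 1) = (if μ i = 0 then (0:ℝ) else 1) := by
      intro i; by_cases h : μ i = 0 <;> simp [hμ'zero i, h]
    have hind2 : ∀ i, (if μ' i = 0 then (1:ℝ) else 0) = (if μ i = 0 then (1:ℝ) else 0) := by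
      intro i; by_cases h : μ i = 0 <;> simp [hμ'zero i, h]
    have hμ'eq : (fun i => if μ i = 0 then (0:ℝ) else muMin μ) = μ' := rfl
    unfold pirObjective
    simp only [hind, hind2, hmin', hmax']
    gcongr
end

section
/- In the PIR caching scheme with uniform placement value μ ∈ (0,1], n queried nodes, T colluding spies with μ(n − T + 1) − 1 > 0, file popularities p_i, and SBS-connectivity distribution γ, the average backhaul rate equals R_PIR = (μ_max / (μ_min(n − T + 1) − 1)) Σ_{i=1}^F p_i ⌈μ_i⌉ Σ_{b=0}^n γ_b (n − b) + Σ_{i=1}^F p_i ⌊1 − μ_i⌋, given that each response has size d L μ_max bits, d = k_max = 1/μ_min, file size is β L bits with β = n − (k_max + T − 1), files not cached are fully downloaded from the MBS, and for a cached file the user downloads n − b responses from the MBS when b SBSs are in range. -/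
open Finset

/-- Proposition 2: the average backhaul rate of the PIR caching
scheme. For a cached file, `n − b` responses of `d L μ_max` bits each are fetched
from the MBS when `b` SBSs are in range; non-cached files (`⌊1−μ_i⌋ = 1`) are fully
downloaded. With `d = k_max = 1/μ_min` and `β = (μ_min(n−T+1)−1)/μ_min` stripes of
`L` bits, normalizing by the file size `βL` gives
`R_PIR = (μ_max/(μ_min(n−T+1)−1)) Σ_i p_i ⌈μ_i⌉ Σ_{b=0}^n γ_b (n−b) + Σ_i p_i ⌊1−μ_i⌋`. -/
theorem backhaul_rate_pir {F : ℕ} (n T : ℕ)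
    (p : Fin F → ℝ) (hp : ∀ i, 0 ≤ p i) (hp1 : ∑ i, p i = 1)
    (γ : ℕ → ℝ) (hγ : ∀ b, 0 ≤ γ b)
    (μ : Fin F → ℝ) (kmax : ℕ) (hkmax : 1 ≤ kmax)
    (μmin μmax : ℝ) (hμmin : μmin = 1 / (kmax : ℝ))
    (hμmax : 0 ≤ μmax)
    (d : ℕ) (hd : d = kmax)
    (β : ℝ) (hβ : β = (μmin * ((n : ℝ) - (T : ℝ) + 1) - 1) / μmin)
    (hβpos : 0 < β) :
    (1 / β) * (∑ i, p i * (if μ i = 0 then 0 else 1) *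
        ∑ b ∈ range (n + 1), γ b * ((n : ℝ) - (b : ℝ)) * ((d : ℝ) * μmax))
      + ∑ i, p i * (if μ i = 0 then 1 else 0)
    = μmax / (μmin * ((n : ℝ) - (T : ℝ) + 1) - 1) *
        (∑ i, p i * (if μ i = 0 then 0 else 1) *
          ∑ b ∈ range (n + 1), γ b * ((n : ℝ) - (b : ℝ)))
      + ∑ i, p i * (if μ i = 0 then 1 else 0) := by
  have hk : (kmax:ℝ) ≠ 0 := by positivity
  have hμ0 : μmin ≠ 0 := by rw [hμmin]; positivity
  have hX : μmin * ((n : ℝ) - (T : ℝ) + 1) - 1 ≠ 0 := by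
    intro h
    rw [hβ, h] at hβpos
    simp at hβpos
  congr 1
  have : ∀ i : Fin F, p i * (if μ i = 0 then 0 else 1) *
        ∑ b ∈ range (n + 1), γ b * ((n : ℝ) - (b : ℝ)) * ((d : ℝ) * μmax)
      = (p i * (if μ i = 0 then 0 else 1) *
        ∑ b ∈ range (n + 1), γ b * ((n : ℝ) - (b : ℝ))) * ((d:ℝ) * μmax) := by
    intro i; rw [← sum_mul]; ring
  simp only [this, ← sum_mul]
  rw [hβ, hd, hμmin]
  field_simp
end

section
/- For the weighted communication rate C_PIR(μ, n) = R_PIR(μ, n) + θ·D_PIR(μ, n) with θ ≥ 0, where R_PIR(μ,n) = (μ_max/(μ_min(n−T+1)−1)) Σ_i p_i ⌈μ_i⌉ Σ_{b=0}^n γ_b (n−b) + Σ_i p_i ⌊1−μ_i⌋ and D_PIR(μ,n) = (μ_max/(μ_min(n−T+1)−1)) Σ_{b=0}^n γ̃_b b, replacing any nonzero feasible placement μ by the placement μ' with μ'_i = μ_min on the support of μ and 0 elsewhere does not increase C_PIR; hence uniform content allocation is also optimal for the weighted objective. -/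
open Finset

/-- The PIR backhaul rate `R_PIR(μ, n)`. -/
noncomputable def RPIR {F : ℕ} (p : Fin F → ℝ) (γ : ℕ → ℝ) (T n : ℕ)
    (μ : Fin F → ℝ) : ℝ :=
  muMax μ / (muMin μ * ((n : ℝ) - (T : ℝ) + 1) - 1) *
      ∑ i, p i * (if μ i = 0 then 0 else 1) *
        ∑ b ∈ range (n + 1), γ b * ((n : ℝ) - (b : ℝ))
    + ∑ i, p i * (if μ i = 0 then 1 else 0)

/-- The average SBS communication rate `D_PIR(μ, n)`, with `γ̃` the truncated
connectivity distribution. -/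
noncomputable def DPIR {F : ℕ} (tγ : ℕ → ℝ) (T n : ℕ) (μ : Fin F → ℝ) : ℝ :=
  muMax μ / (muMin μ * ((n : ℝ) - (T : ℝ) + 1) - 1) *
    ∑ b ∈ range (n + 1), tγ b * (b : ℝ)

/-- for the weighted communication rate
`C_PIR = R_PIR + θ·D_PIR` with `θ ≥ 0`, replacing a nonzero feasible placement `μ`
by the placement `μ'` equal to `μ_min` on the support of `μ` and `0` elsewhere is
again feasible and does not increase `C_PIR`; hence uniform content allocation is
optimal for the weighted objective as well. -/
theorem uniform_placement_optimal_weighted {F NSBS N : ℕ} (T n : ℕ) (hT : 1 ≤ T)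
    (hn : n ≤ NSBS) (hnN : n ≤ N) (M θ : ℝ) (hM : 0 < M) (hθ : 0 ≤ θ)
    (p : Fin F → ℝ) (hp : ∀ i, 0 ≤ p i) (hp1 : ∑ i, p i = 1)
    (γ : ℕ → ℝ) (hγ : ∀ b, 0 ≤ γ b) (hγ1 : ∑ b ∈ range (N + 1), γ b = 1)
    (tγ : ℕ → ℝ)
    (htγ : ∀ b, tγ b = if b < n then γ b else ∑ c ∈ Finset.Icc n N, γ c)
    (μ : Fin F → ℝ)
    (hμval : ∀ i, μ i = 0 ∨ ∃ k : ℕ, 1 ≤ k ∧ k ≤ NSBS - 1 ∧ μ i = 1 / (k : ℝ))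
    (hfeas : ∑ i, μ i ≤ M)
    (hden : 0 < muMin μ * ((n : ℝ) - (T : ℝ) + 1) - 1)
    (hnonzero : μ ≠ 0) :
    (∑ i, (if μ i = 0 then (0 : ℝ) else muMin μ)) ≤ M ∧
      RPIR p γ T n (fun i => if μ i = 0 then 0 else muMin μ)
          + θ * DPIR tγ T n (fun i => if μ i = 0 then 0 else muMin μ)
        ≤ RPIR p γ T n μ + θ * DPIR tγ T n μ := by
  classical
  set S : Set ℝ := {x | x ≠ 0 ∧ ∃ i, μ i = x} with hS
  have hSsub : S ⊆ Set.range μ := fun x hx => hx.2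
  have hSfin : S.Finite := (Set.finite_range μ).subset hSsub
  obtain ⟨i₁, hi₁⟩ : ∃ i, μ i ≠ 0 := by
    by_contra h
    push_neg at h
    exact hnonzero (funext fun i => h i)
  have hSne : S.Nonempty := ⟨μ i₁, hi₁, i₁, rfl⟩
  have hmem : muMin μ ∈ S := hSne.csInf_mem hSfin
  have hle : ∀ x ∈ S, muMin μ ≤ x := fun x hx => csInf_le hSfin.bddBelow hx
  obtain ⟨hmin_ne, i₀, hi₀⟩ := hmem
  have hmin_pos : 0 < muMin μ := by
    rcases hμval i₀ with h | ⟨k, hk1, _, hk⟩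
    · rw [hi₀] at h; exact absurd h hmin_ne
    · rw [← hi₀, hk]
      positivity
  -- feasibility
  have hfeas' : (∑ i, (if μ i = 0 then (0 : ℝ) else muMin μ)) ≤ M := by
    refine le_trans (Finset.sum_le_sum fun i _ => ?_) hfeas
    by_cases h : μ i = 0
    · simp [h]
    · simpa [h] using hle (μ i) ⟨h, i, rfl⟩
  refine ⟨hfeas', ?_⟩
  set μ' : Fin F → ℝ := fun i => if μ i = 0 then 0 else muMin μ with hμ'
  -- muMin μ' = muMin μ
  have hS' : {x | x ≠ 0 ∧ ∃ i, μ' i = x} = {muMin μ} := by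
    ext x
    simp only [Set.mem_setOf_eq, Set.mem_singleton_iff]
    constructor
    · rintro ⟨hx, i, hi⟩
      simp only [hμ'] at hi
      by_cases h : μ i = 0
      · simp [h] at hi; exact absurd hi.symm hx
      · simp [h] at hi; exact hi.symm
    · rintro rfl
      refine ⟨hmin_ne, i₀, ?_⟩
      simp [hμ', hi₀, hmin_ne]
  have hmin' : muMin μ' = muMin μ := by
    rw [muMin, hS', csInf_singleton]
  -- muMax μ' = muMin μ
  have hmax' : muMax μ' = muMin μ := by
    have hbdd : BddAbove (Set.range μ') := (Set.finite_range μ').bddAbove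
    refine le_antisymm ?_ ?_
    · refine csSup_le ⟨μ' i₀, i₀, rfl⟩ ?_
      rintro x ⟨i, rfl⟩
      by_cases h : μ i = 0 <;> simp [hμ', h, hmin_pos.le]
    · refine le_csSup hbdd ⟨i₀, ?_⟩
      simp [hμ', hi₀, hmin_ne]
  have hmaxle : muMin μ ≤ muMax μ := by
    have := le_csSup (Set.finite_range μ).bddAbove ⟨i₀, hi₀⟩
    exact this
  -- nonnegativity of the sums
  have hA : 0 ≤ ∑ i, p i * (if μ i = 0 then (0:ℝ) else 1) *
      ∑ b ∈ range (n + 1), γ b * ((n : ℝ) - (b : ℝ)) := by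
    refine Finset.sum_nonneg fun i _ => ?_
    have h1 : 0 ≤ ∑ b ∈ range (n + 1), γ b * ((n : ℝ) - (b : ℝ)) := by
      refine Finset.sum_nonneg fun b hb => ?_
      have hb' : b ≤ n := Nat.lt_succ_iff.mp (Finset.mem_range.mp hb)
      have : (b : ℝ) ≤ (n : ℝ) := by exact_mod_cast hb'
      have := sub_nonneg.mpr this
      exact mul_nonneg (hγ b) this
    by_cases h : μ i = 0 <;> simp [h] <;> exact mul_nonneg (hp i) h1
  have hC : 0 ≤ ∑ b ∈ range (n + 1), tγ b * (b : ℝ) := by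
    refine Finset.sum_nonneg fun b _ => ?_
    have htb : 0 ≤ tγ b := by
      rw [htγ b]
      by_cases h : b < n
      · simp [h, hγ b]
      · simp only [h, if_false]
        exact Finset.sum_nonneg fun c _ => hγ c
    exact mul_nonneg htb (Nat.cast_nonneg b)
  -- indicators coincide
  have hind0 : ∀ i, (if μ' i = 0 then (0:ℝ) else 1) = (if μ i = 0 then (0:ℝ) else 1) := by
    intro i
    by_cases h : μ i = 0 <;> simp [hμ', h, hmin_ne]
  have hind1 : ∀ i, (if μ' i = 0 then (1:ℝ) else 0) = (if μ i = 0 then (1:ℝ) else 0) := by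
    intro i
    by_cases h : μ i = 0 <;> simp [hμ', h, hmin_ne]
  have hfrac : muMax μ' / (muMin μ' * ((n : ℝ) - (T : ℝ) + 1) - 1)
      ≤ muMax μ / (muMin μ * ((n : ℝ) - (T : ℝ) + 1) - 1) := by
    rw [hmin', hmax']
    gcongr
  show RPIR p γ T n μ' + θ * DPIR tγ T n μ' ≤ RPIR p γ T n μ + θ * DPIR tγ T n μ
  unfold RPIR DPIR
  simp only [hind0, hind1]
  have hfracR := mul_le_mul_of_nonneg_right hfrac hA
  have hfracD := mul_le_mul_of_nonneg_right hfrac hC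
  nlinarith [mul_le_mul_of_nonneg_left hfracD hθ]
end
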